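/- arXiv:1612.00970 — 6 statements merged into one kernel-verified Lean document; each statement's English description precedes it below -/
import Mathlib

section
/- Let q ≥ 2 and b_n = q^{v_q(n)} for n ≥ 1, where v_q is the q-adic valuation (q a fixed integer ≥ 2 and v_q(n) the largest k with q^k ∣ n). Define b_n! = ∏_{m=1}^n b_m. Then for all k ≥ 1 and n ≥ 0, b_{q^k·n}! = q^{n·(q^k - 1)/(q - 1)} · b_n!. -/
/-- `b_n = q^{v_q(n)}` for `n ≥ 1`, `b_0 = 0`, as a rational number. -/
noncomputable def bq (q n : ℕ) : ℚ := if n = 0 then 0 else (q : ℚ) ^ Nat.maxPowDiv q n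

/-- Generalized factorial `b_n! = ∏_{m=1}^n b_m`. -/
noncomputable def bqfac (q n : ℕ) : ℚ := ∏ m ∈ Finset.Icc 1 n, bq q m

/-- Generalized binomial coefficient `C_q(n,m)`, `0` for `m > n`. -/
noncomputable def Cq (q n m : ℕ) : ℚ :=
  if m ≤ n then bqfac q n / (bqfac q m * bqfac q (n - m)) else 0

lemma maxPowDiv_eq_zero_of_not_dvd {q m : ℕ} (h : ¬ q ∣ m) : Nat.maxPowDiv q m = 0 := by
  by_contra hne
  have h1 : 1 ≤ Nat.maxPowDiv q m := Nat.one_le_iff_ne_zero.mpr hne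
  exact h (dvd_trans (dvd_pow_self q hne) (Nat.maxPowDiv.pow_dvd (p := q) (n := m)))

lemma bqfac_base_mul (q : ℕ) (hq : 2 ≤ q) (n : ℕ) :
    bqfac q (q * n) = (q : ℚ) ^ n * bqfac q n := by
  induction n with
  | zero => simp [bqfac]
  | succ n ih =>
    have hblock : ∏ m ∈ Finset.Ioc (q * n) (q * (n + 1)), bq q m = (q : ℚ) * bq q (n + 1) := by
      have hmem : q * (n + 1) ∈ Finset.Ioc (q * n) (q * (n + 1)) := by
        simp [Finset.mem_Ioc]
        nlinarith
      rw [Finset.prod_eq_single_of_mem _ hmem]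
      · rw [bq, if_neg (by positivity), bq, if_neg (by omega),
          Nat.maxPowDiv, Nat.maxPowDiv.base_mul_eq_succ (by omega) (by omega), pow_succ]
        ring
      · intro m hm hne
        simp only [Finset.mem_Ioc] at hm
        have hndvd : ¬ q ∣ m := by
          rintro ⟨t, rfl⟩
          have : t = n + 1 := by
            have h1 : n < t := by
              by_contra h'
              exact absurd (Nat.mul_le_mul_left q (by omega : t ≤ n)) (by omega)
            have h2 : t ≤ n + 1 := by
              by_contra h'
              exact absurd (Nat.mul_le_mul_left q (by omega : n + 2 ≤ t)) (by
                have := hm.2; push_neg; nlinarith)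
            omega
          exact hne (by rw [this])
        rw [bq, if_neg (by omega), maxPowDiv_eq_zero_of_not_dvd hndvd, pow_zero]
    have hsplit : bqfac q (q * (n + 1)) =
        bqfac q (q * n) * ∏ m ∈ Finset.Ioc (q * n) (q * (n + 1)), bq q m := by
      rw [bqfac, bqfac, (show ∀ b : ℕ, Finset.Icc 1 b = Finset.Ioc 0 b from Finset.Icc_add_one_left_eq_Ioc 0), (show ∀ b : ℕ, Finset.Icc 1 b = Finset.Ioc 0 b from Finset.Icc_add_one_left_eq_Ioc 0)]
      exact (Finset.prod_Ioc_consecutive _ (Nat.zero_le _)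
        (Nat.mul_le_mul_left q (Nat.le_succ n))).symm
    have hlast : bqfac q (n + 1) = bqfac q n * bq q (n + 1) := by
      rw [bqfac, bqfac, (show ∀ b : ℕ, Finset.Icc 1 b = Finset.Ioc 0 b from Finset.Icc_add_one_left_eq_Ioc 0), (show ∀ b : ℕ, Finset.Icc 1 b = Finset.Ioc 0 b from Finset.Icc_add_one_left_eq_Ioc 0),
        ← Finset.prod_Ioc_consecutive _ (Nat.zero_le n) (Nat.le_succ n),
        Nat.Ioc_succ_singleton, Finset.prod_singleton]
    rw [hsplit, hblock, ih, hlast, pow_succ]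
    ring

lemma geom_div (q : ℕ) (hq : 2 ≤ q) (k : ℕ) :
    (q ^ k - 1) / (q - 1) = ∑ i ∈ Finset.range k, q ^ i := by
  have hgeom : ∀ k, (q - 1) * ∑ i ∈ Finset.range k, q ^ i = q ^ k - 1 := by
    intro k
    induction k with
    | zero => simp
    | succ k ih =>
      rw [Finset.sum_range_succ, Nat.mul_add]
      have h1 : 1 ≤ q ^ k := Nat.one_le_pow _ _ (by omega)
      have h2 : q ^ (k + 1) = q * q ^ k := by ring
      have h3 : (q - 1) * q ^ k = q * q ^ k - q ^ k := by
        rw [Nat.sub_mul, one_mul]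
      have h4 : q ^ k ≤ q * q ^ k := Nat.le_mul_of_pos_left _ (by omega)
      omega
  rw [← hgeom k, Nat.mul_div_cancel_left _ (by omega : 0 < q - 1)]

theorem stmt3 (q : ℕ) (hq : 2 ≤ q) (k n : ℕ) (hk : 1 ≤ k) :
    bqfac q (q ^ k * n) = (q : ℚ) ^ (n * ((q ^ k - 1) / (q - 1))) * bqfac q n := by
  clear hk
  -- holds for all k, including k = 0
  induction k with
  | zero => simp
  | succ k ih =>
    have : q ^ (k + 1) * n = q * (q ^ k * n) := by ring
    rw [this, bqfac_base_mul q hq, ih, ← mul_assoc, ← pow_add]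
    congr 2
    rw [geom_div q hq, geom_div q hq, Finset.sum_range_succ, Nat.mul_add]
    ring
end

section
/- Let q ≥ 2, b_n = q^{v_q(n)}, b_n! = ∏_{m=1}^n b_m, and C_q(n,m) = b_n!/(b_m!·b_{n-m}!). Then for all k ≥ 1, n ≥ m ≥ 0, and 0 ≤ j ≤ i < q^k: C_q(q^k·n + i, q^k·m + j) = C_q(n,m) · C_q(i,j). -/
lemma bq_ne_zero {q : ℕ} (hq : 2 ≤ q) {n : ℕ} (hn : n ≠ 0) : bq q n ≠ 0 := by
  simp only [bq, if_neg hn]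
  positivity

lemma bqfac_ne_zero {q : ℕ} (hq : 2 ≤ q) (n : ℕ) : bqfac q n ≠ 0 := by
  refine Finset.prod_ne_zero_iff.2 fun m hm => bq_ne_zero hq ?_
  have := (Finset.mem_Icc.1 hm).1; omega

lemma bqfac_succ (q n : ℕ) : bqfac q (n + 1) = bqfac q n * bq q (n + 1) := by
  simp [bqfac, Finset.prod_Icc_succ_top (Nat.le_add_left 1 n)]

lemma maxPowDiv_lt {q : ℕ} (hq : 2 ≤ q) {r k : ℕ} (hr : r ≠ 0) (h : r < q ^ k) :
    Nat.maxPowDiv q r < k := by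
  by_contra hc
  push_neg at hc
  have h1 : q ^ k ∣ r := dvd_trans (pow_dvd_pow q hc) (Nat.maxPowDiv.pow_dvd (p := q) (n := r))
  have := Nat.le_of_dvd (Nat.pos_of_ne_zero hr) h1
  omega

lemma maxPowDiv_add {q : ℕ} (hq : 2 ≤ q) {k r : ℕ} (t : ℕ) (hr : r ≠ 0) (h : r < q ^ k) :
    Nat.maxPowDiv q (q ^ k * t + r) = Nat.maxPowDiv q r := by
  have hd : Nat.maxPowDiv q r < k := maxPowDiv_lt hq hr h
  set d := Nat.maxPowDiv q r with hdd
  have hdvd : q ^ d ∣ q ^ k * t + r :=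
    Dvd.dvd.add (Dvd.dvd.mul_right (pow_dvd_pow q hd.le) t) (Nat.maxPowDiv.pow_dvd (p := q) (n := r))
  have hpos : 0 < q ^ k * t + r := by positivity
  refine le_antisymm ?_ (by rw [Nat.maxPowDiv]; exact (Nat.pow_dvd_iff_le_padicValNat (by omega) hpos.ne').mp hdvd)
  by_contra hc
  push_neg at hc
  have h1 : q ^ (d + 1) ∣ q ^ k * t + r :=
    dvd_trans (pow_dvd_pow q hc) (Nat.maxPowDiv.pow_dvd (p := q))
  have h2 : q ^ (d + 1) ∣ q ^ k * t := Dvd.dvd.mul_right (pow_dvd_pow q (by omega)) t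
  have h3 : q ^ (d + 1) ∣ r := (Nat.dvd_add_right h2).mp h1
  have : d + 1 ≤ d := (Nat.pow_dvd_iff_le_padicValNat (p := q) (by omega) (Nat.pos_of_ne_zero hr).ne').mp h3
  omega

lemma bqfac_split {q : ℕ} (hq : 2 ≤ q) {k : ℕ} (n : ℕ) {i : ℕ} (hi : i < q ^ k) :
    bqfac q (q ^ k * n + i) = bqfac q (q ^ k * n) * bqfac q i := by
  induction i with
  | zero => simp [bqfac]
  | succ i ih =>
    have hi' : i < q ^ k := by omega
    rw [← Nat.add_assoc, bqfac_succ, ih hi', bqfac_succ, Nat.add_assoc, mul_assoc]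
    congr 2
    unfold bq
    rw [if_neg (by omega), if_neg (by omega), maxPowDiv_add hq n (by omega) (by omega)]

lemma bq_mul {q : ℕ} (hq : 2 ≤ q) {k : ℕ} {t : ℕ} (ht : t ≠ 0) :
    bq q (q ^ k * t) = (q : ℚ) ^ k * bq q t := by
  have hqk : 0 < q ^ k := by positivity
  unfold bq
  rw [if_neg (by positivity), if_neg ht, Nat.maxPowDiv, Nat.maxPowDiv.base_pow_mul (by omega) (Nat.pos_of_ne_zero ht).ne',
    pow_add, mul_comm]

lemma bqfac_mul {q : ℕ} (hq : 2 ≤ q) {k : ℕ} (hk : 1 ≤ k) (n : ℕ) :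
    bqfac q (q ^ k * n) = (bqfac q (q ^ k - 1) * (q : ℚ) ^ k) ^ n * bqfac q n := by
  have hqk : 1 ≤ q ^ k := Nat.one_le_pow _ _ (by omega)
  induction n with
  | zero => simp [bqfac]
  | succ n ih =>
    have h0 : q ^ k * (n + 1) = q ^ k * n + q ^ k := by ring
    have h1 : q ^ k * (n + 1) = (q ^ k * n + (q ^ k - 1)) + 1 := by omega
    rw [h1, bqfac_succ, bqfac_split hq n (by omega), ← h1,
      bq_mul hq (by omega), ih, bqfac_succ]
    ring

theorem stmt4 (q : ℕ) (hq : 2 ≤ q) (k n m i j : ℕ) (hk : 1 ≤ k)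
    (hmn : m ≤ n) (hji : j ≤ i) (hi : i < q ^ k) :
    Cq q (q ^ k * n + i) (q ^ k * m + j) = Cq q n m * Cq q i j := by
  have hle : q ^ k * m + j ≤ q ^ k * n + i := by
    have := Nat.mul_le_mul_left (q ^ k) hmn; omega
  have hsub : (q ^ k * n + i) - (q ^ k * m + j) = q ^ k * (n - m) + (i - j) := by
    obtain ⟨d, rfl⟩ := Nat.exists_eq_add_of_le hmn
    obtain ⟨e, rfl⟩ := Nat.exists_eq_add_of_le hji
    have h1 : q ^ k * (m + d) = q ^ k * m + q ^ k * d := by ring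
    have h2 : m + d - m = d := by omega
    have h3 : j + e - j = e := by omega
    rw [h2, h3]
    omega
  rw [Cq, Cq, Cq, if_pos hle, if_pos hmn, if_pos hji, hsub,
    bqfac_split hq n hi, bqfac_split hq m (by omega), bqfac_split hq (n - m) (by omega),
    bqfac_mul hq hk n, bqfac_mul hq hk m, bqfac_mul hq hk (n - m)]
  have hB : (bqfac q (q ^ k - 1) * (q : ℚ) ^ k) ≠ 0 := by
    have : (q : ℚ) ≠ 0 := by positivity
    exact mul_ne_zero (bqfac_ne_zero hq _) (by positivity)
  have hBn : (bqfac q (q ^ k - 1) * (q : ℚ) ^ k) ^ m * (bqfac q (q ^ k - 1) * (q : ℚ) ^ k) ^ (n - m)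
      = (bqfac q (q ^ k - 1) * (q : ℚ) ^ k) ^ n := by
    rw [← pow_add]
    congr 1
    omega
  rw [div_mul_div_comm, div_eq_div_iff
    (by apply_rules [mul_ne_zero, pow_ne_zero, hB, bqfac_ne_zero hq])
    (by apply_rules [mul_ne_zero, pow_ne_zero, hB, bqfac_ne_zero hq]), ← hBn]
  ring
end

section
/- Define the zero generalized Pascal matrix entry Z_q(n,m) for a fixed integer q ≥ 2 by: Z_q(n,m) = 1 if for every k ≥ 1 one has n mod q^k ≥ m mod q^k, and Z_q(n,m) = 0 otherwise. Then for all k ≥ 1, n, m ≥ 0, and 0 ≤ i, j < q^k: Z_q(q^k·n + i, q^k·m + j) = Z_q(n,m) · Z_q(i,j). -/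
open Classical in
/-- Zero generalized Pascal matrix entry: `1` if `n mod q^k ≥ m mod q^k` for all `k ≥ 1`,
`0` otherwise. -/
noncomputable def Z (q n m : ℕ) : ℕ :=
  if ∀ k ≥ 1, m % q ^ k ≤ n % q ^ k then 1 else 0

/-!
Appending the base-`q^k` digit `i` to `n` gives `q^k n + i`, and its residue modulo `q^l` is
`i mod q^l` for `l ≤ k` and `q^k (n mod q^t) + i` for `l = k + t`. Comparing residues of
`q^k n + i` and `q^k m + j` therefore splits into comparing the residues of `i` and `j` at the
levels `l ≤ k`, and at the higher levels comparing the residues of `n` and `m`, the low digits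
`i, j < q^k` never overturning a strict inequality of the high parts.
-/

namespace Nat

theorem mul_add_mod_of_dvd {a c : ℕ} (h : c ∣ a) (n i : ℕ) : (a * n + i) % c = i % c := by
  obtain ⟨d, rfl⟩ := h
  rw [mul_assoc, Nat.mul_add_mod]

theorem mul_add_mod_mul {a i : ℕ} (hi : i < a) (b n : ℕ) :
    (a * n + i) % (a * b) = a * (n % b) + i := by
  rw [Nat.mod_mul, Nat.mul_add_mod, Nat.mod_eq_of_lt hi, Nat.mul_add_div (by omega),
    Nat.div_eq_of_lt hi, add_zero, add_comm]

theorem le_of_mul_add_le_mul_add {a x y i j : ℕ} (hj : j < a) (hi : i < a)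
    (h : a * x + j ≤ a * y + i) : x ≤ y := by
  have ha : 0 < a := by omega
  simpa [Nat.mul_add_div ha, Nat.div_eq_of_lt hi, Nat.div_eq_of_lt hj] using
    Nat.div_le_div_right (c := a) h

end Nat

def ModPowDominates (q n m : ℕ) : Prop :=
  ∀ k ≥ 1, m % q ^ k ≤ n % q ^ k

open Classical in
theorem Z_eq_ite (q n m : ℕ) : Z q n m = if ModPowDominates q n m then 1 else 0 := rfl

namespace ModPowDominates

variable {q k n m i j : ℕ}

theorem le_of_lt_pow (h : ModPowDominates q i j) (hk : 1 ≤ k) (hi : i < q ^ k)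
    (hj : j < q ^ k) : j ≤ i := by
  simpa [Nat.mod_eq_of_lt hi, Nat.mod_eq_of_lt hj] using h k hk

theorem mul_pow_add_iff (hk : 1 ≤ k) (hi : i < q ^ k) (hj : j < q ^ k) :
    ModPowDominates q (q ^ k * n + i) (q ^ k * m + j) ↔
      ModPowDominates q n m ∧ ModPowDominates q i j := by
  have hq : 0 < q := (pow_pos_iff (by omega)).mp (Nat.zero_lt_of_lt hi)
  have low {l} (hl : l ≤ k) (a b : ℕ) : (q ^ k * a + b) % q ^ l = b % q ^ l :=
    Nat.mul_add_mod_of_dvd (pow_dvd_pow q hl) a b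
  have high {t a b} (hb : b < q ^ k) :
      (q ^ k * a + b) % q ^ (k + t) = q ^ k * (a % q ^ t) + b := by
    rw [pow_add, Nat.mul_add_mod_mul hb]
  constructor
  · intro h
    have hji : j ≤ i := by
      simpa [low le_rfl, Nat.mod_eq_of_lt hi, Nat.mod_eq_of_lt hj] using h k hk
    refine ⟨fun t ht => ?_, fun l hl => ?_⟩
    · have := h (k + t) (by omega)
      rw [high hi, high hj] at this
      exact Nat.le_of_mul_add_le_mul_add hj hi this
    · rcases le_or_gt l k with hlk | hkl
      · simpa [low hlk] using h l hl
      · have hkl : q ^ k ≤ q ^ l := Nat.pow_le_pow_right hq hkl.le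
        rwa [Nat.mod_eq_of_lt (hi.trans_le hkl), Nat.mod_eq_of_lt (hj.trans_le hkl)]
  · rintro ⟨hnm, hij⟩ l hl
    rcases le_or_gt l k with hlk | hkl
    · simpa [low hlk] using hij l hl
    · obtain ⟨t, rfl⟩ := Nat.exists_eq_add_of_le hkl.le
      rw [high hi, high hj]
      exact Nat.add_le_add (Nat.mul_le_mul_left _ (hnm t (by omega)))
        (hij.le_of_lt_pow hk hi hj)

end ModPowDominates

theorem stmt7_general (q : ℕ) (k n m i j : ℕ) (hk : 1 ≤ k)
    (hi : i < q ^ k) (hj : j < q ^ k) :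
    Z q (q ^ k * n + i) (q ^ k * m + j) = Z q n m * Z q i j := by
  classical
  rw [Z_eq_ite, Z_eq_ite, Z_eq_ite, ite_zero_mul_ite_zero, mul_one]
  exact if_congr (ModPowDominates.mul_pow_add_iff hk hi hj) rfl rfl

theorem stmt7 (q : ℕ) (hq : 2 ≤ q) (k n m i j : ℕ) (hk : 1 ≤ k)
    (hi : i < q ^ k) (hj : j < q ^ k) :
    Z q (q ^ k * n + i) (q ^ k * m + j) = Z q n m * Z q i j :=
  stmt7_general q k n m i j hk hi hj
end

section
/- Define L_q(n,m) = ∏_{i=0}^{∞} binom(n_i, m_i), where n_i, m_i are the base-q digits of n, m (q ≥ 2 fixed, ordinary binomial coefficients, finite product). Then for all n with digits n_i: Σ_{m=0}^{n} L_q(n,m)·x^m = ∏_{i=0}^{∞} (1 + x^{q^i})^{n_i} as polynomials in x. -/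
/-- `L_q(n,m) = ∏_i binom(n_i, m_i)` over the base-`q` digits (finite product, as digits
are eventually 0 and `binom 0 0 = 1`). -/
noncomputable def L (q n m : ℕ) : ℕ :=
  ∏ᶠ i : ℕ, Nat.choose (n / q ^ i % q) (m / q ^ i % q)

open Polynomial Finset

lemma L_eq_prod (q N n m : ℕ) (hq : 2 ≤ q) (hn : n < q ^ N) (hm : m < q ^ N) :
    L q n m = ∏ i ∈ range N, Nat.choose (n / q ^ i % q) (m / q ^ i % q) := by
  apply finprod_eq_prod_of_mulSupport_subset
  intro i hi
  simp only [Finset.coe_range, Set.mem_Iio]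
  by_contra h
  push_neg at h
  have hqi : q ^ N ≤ q ^ i := Nat.pow_le_pow_right (by omega) h
  have h1 : n / q ^ i = 0 := Nat.div_eq_of_lt (lt_of_lt_of_le hn hqi)
  have h2 : m / q ^ i = 0 := Nat.div_eq_of_lt (lt_of_lt_of_le hm hqi)
  apply hi
  simp [Function.mem_mulSupport, h1, h2]

lemma aux10 (q : ℕ) (hq : 2 ≤ q) : ∀ N, ∀ n, n < q ^ N →
    ∑ m ∈ range (n + 1),
        Polynomial.C ((∏ i ∈ range N, Nat.choose (n / q ^ i % q) (m / q ^ i % q) : ℕ) : ℤ)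
          * X ^ m
      = ∏ i ∈ range N, (1 + X ^ q ^ i) ^ (n / q ^ i % q) := by
  intro N
  induction N with
  | zero =>
    intro n hn
    have hn0 : n = 0 := by simpa [Nat.lt_one_iff] using hn
    subst hn0
    simp
  | succ N ih =>
    intro n hn
    have hq0 : 0 < q := by omega
    set a := n / q with ha
    set b := n % q with hb
    have hab : q * a + b = n := Nat.div_add_mod n q
    have ha' : a < q ^ N := by
      rw [ha]
      exact (Nat.div_lt_iff_lt_mul hq0).mpr (by rw [← pow_succ]; exact hn)
    have hb' : b < q := Nat.mod_lt n hq0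
    have hmul : q * (a + 1) = q * a + q := by ring
    -- digit facts
    have hdig : ∀ i k : ℕ, k / q ^ (i + 1) % q = (k / q) / q ^ i % q := by
      intro i k
      rw [Nat.div_div_eq_div_mul, ← pow_succ']
    -- RHS peeling off i = 0
    rw [Finset.prod_range_succ']
    simp only [hdig, pow_zero, pow_one, Nat.div_one]
    rw [← ha, ← hb]
    -- rewrite the tail product as a composition
    have hcomp : ∏ i ∈ range N, (1 + X ^ q ^ (i + 1)) ^ (a / q ^ i % q)
        = (∏ i ∈ range N, ((1 : ℤ[X]) + X ^ q ^ i) ^ (a / q ^ i % q)).comp (X ^ q) := by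
      rw [Polynomial.prod_comp]
      refine Finset.prod_congr rfl fun i _ => ?_
      rw [Polynomial.pow_comp, Polynomial.add_comp, Polynomial.one_comp,
        Polynomial.pow_comp, Polynomial.X_comp, ← pow_mul, ← pow_succ']
    rw [hcomp, ← ih a ha', Polynomial.sum_comp]
    simp only [Polynomial.mul_comp, Polynomial.C_comp, Polynomial.pow_comp, Polynomial.X_comp,
      ← pow_mul]
    -- expand (1 + X)^b
    have hpow : ((1 : ℤ[X]) + X) ^ b
        = ∑ c ∈ range q, Polynomial.C ((b.choose c : ℕ) : ℤ) * X ^ c := by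
      calc ((1 : ℤ[X]) + X) ^ b
          = ∑ c ∈ range (b + 1), Polynomial.C ((b.choose c : ℕ) : ℤ) * X ^ c := by
            rw [add_comm, add_pow]
            refine Finset.sum_congr rfl fun c _ => ?_
            rw [one_pow, mul_one, Polynomial.C_eq_natCast]
            ring
        _ = ∑ c ∈ range q, Polynomial.C ((b.choose c : ℕ) : ℤ) * X ^ c := by
            apply Finset.sum_subset (Finset.range_subset_range.mpr (by omega))
            intro c _ hc
            simp only [Finset.mem_range, not_lt] at hc
            rw [Nat.choose_eq_zero_of_lt (by omega)]
            simp
    rw [hpow]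
    -- extend LHS sum to range (q * (a + 1))
    have hsub : range (n + 1) ⊆ range (q * (a + 1)) := by
      apply Finset.range_subset_range.mpr
      rw [hmul]
      omega
    rw [Finset.sum_subset hsub ?hz]
    case hz =>
      intro m hm hm'
      simp only [Finset.mem_range, not_lt] at hm hm'
      rw [hmul] at hm
      have hmq : m / q = a :=
        Nat.div_eq_of_lt_le (by rw [mul_comm]; omega) (by rw [add_mul, one_mul, mul_comm]; omega)
      have hmr : b < m % q := by
        have h := Nat.div_add_mod m q
        rw [hmq] at h
        omega
      have : ∏ i ∈ range (N + 1), Nat.choose (n / q ^ i % q) (m / q ^ i % q) = 0 := by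
        apply Finset.prod_eq_zero (Finset.mem_range.mpr (Nat.succ_pos N))
        simp only [pow_zero, Nat.div_one]
        rw [← hb]
        exact Nat.choose_eq_zero_of_lt hmr
      rw [this]
      simp
    -- now reindex the LHS sum over pairs (d, c) with m = q * d + c
    rw [Finset.sum_mul_sum]
    rw [← Finset.sum_product']
    apply Finset.sum_nbij' (fun m => (m / q, m % q)) (fun p => q * p.1 + p.2)
    · intro m hm
      simp only [Finset.mem_range] at hm
      simp only [Finset.mem_product, Finset.mem_range]
      exact ⟨Nat.div_lt_of_lt_mul hm, Nat.mod_lt m hq0⟩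
    · intro p hp
      simp only [Finset.mem_product, Finset.mem_range] at hp
      simp only [Finset.mem_range]
      have h1 : q * (p.1 + 1) ≤ q * (a + 1) := Nat.mul_le_mul_left q (by omega)
      rw [Nat.mul_succ] at h1
      omega
    · intro m _
      exact Nat.div_add_mod m q
    · intro p hp
      simp only [Finset.mem_product, Finset.mem_range] at hp
      have h1 : (q * p.1 + p.2) / q = p.1 := by
        rw [Nat.mul_add_div hq0, Nat.div_eq_of_lt hp.2]; omega
      have h2 : (q * p.1 + p.2) % q = p.2 := by
        rw [Nat.mul_add_mod, Nat.mod_eq_of_lt hp.2]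
      simp [h1, h2]
    · intro m hm
      simp only [Finset.mem_range] at hm
      rw [Finset.prod_range_succ']
      simp only [hdig, pow_zero, Nat.div_one, ← ha, ← hb]
      have hm2 : (X : ℤ[X]) ^ m = X ^ (q * (m / q)) * X ^ (m % q) := by
        rw [← pow_add, Nat.div_add_mod]
      push_cast
      rw [map_mul, hm2]
      ring

open Polynomial in
theorem stmt10 (q : ℕ) (hq : 2 ≤ q) (n N : ℕ) (hN : n < q ^ N) :
    ∑ m ∈ Finset.range (n + 1), Polynomial.C ((L q n m : ℤ)) * X ^ m =
      ∏ i ∈ Finset.range N, (1 + X ^ q ^ i) ^ (n / q ^ i % q) := by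
  rw [← aux10 q hq N n hN]
  refine Finset.sum_congr rfl fun m hm => ?_
  simp only [Finset.mem_range] at hm
  rw [L_eq_prod q N n m hq hN (by omega)]
end

section
/- Let c_n = 1/b_n! where b_n = 2^{v_2(n)} and b_n! = ∏_{m=1}^n b_m. Then c_{2n} = c_{2n+1} = c_n/2^n for all n ≥ 0, and the generating function c(x) = Σ_n c_n x^n satisfies c(x) = (1 + x)·c(x^2/2) as formal power series over ℚ. -/
/-- `b_n = 2^{v_2(n)}` for `n ≥ 1`, `b_0 = 0`. -/
noncomputable def b2 (n : ℕ) : ℚ := if n = 0 then 0 else (2 : ℚ) ^ Nat.maxPowDiv 2 n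

/-- `b_n! = ∏_{m=1}^n b_m`. -/
noncomputable def b2fac (n : ℕ) : ℚ := ∏ m ∈ Finset.Icc 1 n, b2 m

/-- `c_n = 1/b_n!`. -/
noncomputable def c (n : ℕ) : ℚ := 1 / b2fac n

lemma maxPowDiv_odd (n : ℕ) : Nat.maxPowDiv 2 (2 * n + 1) = 0 := by
  by_contra h
  have hd := Nat.maxPowDiv.pow_dvd (p := 2) (n := 2 * n + 1)
  have h2 : 2 ∣ 2 * n + 1 := dvd_trans (dvd_pow_self 2 h) hd
  omega

lemma b2_odd (n : ℕ) : b2 (2 * n + 1) = 1 := by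
  simp [b2, maxPowDiv_odd]

lemma b2_even (n : ℕ) (hn : n ≠ 0) : b2 (2 * n) = 2 * b2 n := by
  have : Nat.maxPowDiv 2 (2 * n) = Nat.maxPowDiv 2 n + 1 :=
    Nat.maxPowDiv.base_mul_eq_succ (p := 2) (n := n) one_lt_two hn
  rw [b2, b2, if_neg (by omega), if_neg hn, this, pow_succ]
  ring

lemma b2fac_succ (n : ℕ) : b2fac (n + 1) = b2fac n * b2 (n + 1) := by
  rw [b2fac, b2fac, Finset.prod_Icc_succ_top (by omega)]

lemma b2fac_even : ∀ n, b2fac (2 * n) = 2 ^ n * b2fac n := by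
  intro n
  induction n with
  | zero => simp
  | succ k ih =>
    have : 2 * (k + 1) = (2 * k + 1) + 1 := by ring
    rw [this, b2fac_succ, b2fac_succ, ih, b2fac_succ]
    have : (2 * k + 1) + 1 = 2 * (k + 1) := by ring
    rw [this, b2_odd, b2_even _ k.succ_ne_zero]
    ring

lemma b2fac_ne (n : ℕ) : b2fac n ≠ 0 := by
  rw [b2fac]
  refine Finset.prod_ne_zero_iff.mpr fun m hm => ?_
  simp only [Finset.mem_Icc] at hm
  simp [b2, show m ≠ 0 by omega]

lemma key (n : ℕ) : c (2 * n) = c n / 2 ^ n ∧ c (2 * n + 1) = c n / 2 ^ n := by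
  have h1 : c (2 * n) = c n / 2 ^ n := by
    rw [c, c, b2fac_even]
    rw [mul_comm]
    field_simp
  refine ⟨h1, ?_⟩
  rw [c, b2fac_succ, b2_odd, mul_one, ← c, h1]

theorem stmt16 :
    (∀ n : ℕ, c (2 * n) = c n / 2 ^ n ∧ c (2 * n + 1) = c n / 2 ^ n) ∧
    PowerSeries.mk c = (1 + PowerSeries.X) *
      PowerSeries.mk (fun n => if 2 ∣ n then c (n / 2) / 2 ^ (n / 2) else 0) := by
  refine ⟨key, ?_⟩
  ext n
  rw [add_mul, one_mul, map_add]
  rcases n with _ | m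
  · simp [PowerSeries.coeff_zero_X_mul, c, b2fac]
  · rw [PowerSeries.coeff_succ_X_mul, PowerSeries.coeff_mk, PowerSeries.coeff_mk,
      PowerSeries.coeff_mk]
    rcases Nat.even_or_odd (m + 1) with ⟨k, hk⟩ | ⟨k, hk⟩
    · have h2 : 2 ∣ m + 1 := ⟨k, by omega⟩
      have h2' : ¬ 2 ∣ m := by omega
      rw [if_pos h2, if_neg h2', add_zero]
      have : (m + 1) / 2 = k := by omega
      rw [this, show m + 1 = 2 * k by omega, (key k).1]
    · have h2 : ¬ 2 ∣ m + 1 := by omega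
      have h2' : 2 ∣ m := ⟨k, by omega⟩
      rw [if_neg h2, if_pos h2', zero_add]
      have : m / 2 = k := by omega
      rw [this, show m + 1 = 2 * k + 1 by omega, (key k).2]
end

section
/- Fix q ≥ 2 and φ ≠ 0 in ℚ. Define c_n = φ^{-⌊n/q⌋}. Then the generalized Pascal entry P(n,m) = c_m·c_{n-m}/c_n satisfies: P(n,m) = 1 if n mod q ≥ m mod q, and P(n,m) = φ if n mod q < m mod q, for all 0 ≤ m ≤ n. -/
/-!
Writing `n = m + (n - m)`, the quotient `n / q` is `m / q + (n - m) / q` plus the carry of the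
addition of the residues, and that carry is `1` exactly when `n % q < m % q`. Hence
`c m * c (n - m) / c n = φ ^ carry`.
-/

theorem Nat.div_eq_div_add_sub_div_add_ite {m n : ℕ} (q : ℕ) (hmn : m ≤ n) :
    n / q = m / q + (n - m) / q + if n % q < m % q then 1 else 0 := by
  rcases Nat.eq_zero_or_pos q with rfl | hq
  · simp [hmn.not_gt]
  have hsum : m + (n - m) = n := Nat.add_sub_cancel' hmn
  have hmod := Nat.add_mod_add_ite m (n - m) q
  have hlt := Nat.mod_lt (n - m) hq
  conv_lhs => rw [← hsum, Nat.add_div hq]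
  rw [hsum] at hmod
  split_ifs at hmod ⊢ <;> omega

theorem zpow_neg_mul_zpow_neg_div_zpow_neg {G : Type*} [CommGroupWithZero G] {φ : G}
    (hφ : φ ≠ 0) (a b k : ℕ) :
    φ ^ (-(a : ℤ)) * φ ^ (-(b : ℤ)) / φ ^ (-((a + b + k : ℕ) : ℤ)) = φ ^ k := by
  rw [← zpow_add₀ hφ, ← zpow_sub₀ hφ, ← zpow_natCast]
  congr 1
  push_cast
  ring

theorem stmt18_general (q : ℕ) (φ : ℚ) (hφ : φ ≠ 0) (c : ℕ → ℚ)
    (hc : ∀ r : ℕ, c r = φ ^ (-((r / q : ℕ) : ℤ))) (n m : ℕ) (hmn : m ≤ n) :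
    (m % q ≤ n % q → c m * c (n - m) / c n = 1) ∧
    (n % q < m % q → c m * c (n - m) / c n = φ) := by
  have hP : c m * c (n - m) / c n = φ ^ (if n % q < m % q then 1 else 0) := by
    rw [hc, hc, hc, Nat.div_eq_div_add_sub_div_add_ite q hmn,
      zpow_neg_mul_zpow_neg_div_zpow_neg hφ]
  rw [hP]
  constructor
  · intro h
    rw [if_neg h.not_gt, pow_zero]
  · intro h
    rw [if_pos h, pow_one]

theorem stmt18 (q : ℕ) (hq : 2 ≤ q) (φ : ℚ) (hφ : φ ≠ 0) (c : ℕ → ℚ)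
    (hc : ∀ r : ℕ, c r = φ ^ (-((r / q : ℕ) : ℤ))) (n m : ℕ) (hmn : m ≤ n) :
    (m % q ≤ n % q → c m * c (n - m) / c n = 1) ∧
    (n % q < m % q → c m * c (n - m) / c n = φ) :=
  stmt18_general q φ hφ c hc n m hmn
end
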